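/- arXiv:1807.11505 — 2 statements merged into one kernel-verified Lean document; each statement's English description precedes it below -/
import Mathlib

section
/- Every 101-avoiding ascent sequence of length n, when written in the canonical form determined by its Fishburn matrix, corresponds to an SE-free matrix, and conversely: f_AM restricts to a bijection between 101-avoiding ascent sequences of length n and SE-free Fishburn matrices of size n. -/
def ascents (l : List ℕ) : ℕ :=
  ((l.zip l.tail).filter (fun p => p.1 < p.2)).length

def IsAscSeq (l : List ℕ) : Prop :=
  l.getD 0 0 = 0 ∧
  ∀ k, k < l.length → 0 < k → l.getD k 0 ≤ ascents (l.take k) + 1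

def IsRGF (l : List ℕ) : Prop :=
  l.getD 0 0 = 0 ∧
  ∀ k, k < l.length → ∀ j, l.getD k 0 = j + 1 → ∃ i, i < k ∧ l.getD i 0 = j

def SelfModified (l : List ℕ) : Prop :=
  IsAscSeq l ∧
  ∀ k, k < l.length → 0 < k →
    l.getD k 0 ≤ l.getD (k - 1) 0 ∨ l.getD k 0 = ascents (l.take k) + 1

def Contains101 (l : List ℕ) : Prop :=
  ∃ i j k, i < j ∧ j < k ∧ k < l.length ∧
    l.getD i 0 = l.getD k 0 ∧ l.getD j 0 < l.getD k 0

def Contains0101 (l : List ℕ) : Prop :=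
  ∃ i j k m, i < j ∧ j < k ∧ k < m ∧ m < l.length ∧
    l.getD i 0 = l.getD k 0 ∧ l.getD j 0 = l.getD m 0 ∧ l.getD i 0 < l.getD j 0

def Contains1010 (l : List ℕ) : Prop :=
  ∃ i j k m, i < j ∧ j < k ∧ k < m ∧ m < l.length ∧
    l.getD i 0 = l.getD k 0 ∧ l.getD j 0 = l.getD m 0 ∧ l.getD j 0 < l.getD i 0

/-- The view of position `i` in the sequence `a`: the number of indices `j > i` such
that `a j` strictly exceeds all entries `a k` for `i ≤ k < j`.  This agrees with the
recursive definition `v i = v j + 1` for `j` the least index `> i` with `a j > a i`. -/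
def view {α : Type*} [LinearOrder α] [Inhabited α] (a : List α) (i : ℕ) : ℕ :=
  ((List.range a.length).filter (fun j =>
    decide (i < j ∧ ∀ k, k < j → i ≤ k → a.getD k default < a.getD j default))).length

/-- The panorama of `a`: the views of the positions of `a`, listed grouped by entry
value from largest value to smallest, positions within a group in increasing order. -/
def pan {α : Type*} [LinearOrder α] [Inhabited α] (a : List α) : List ℕ :=
  ((List.range a.length).mergeSort (fun i j =>
    decide (a.getD j default < a.getD i default ∨
      (a.getD i default = a.getD j default ∧ i ≤ j)))).map (view a)

/-- A square matrix of natural numbers, given by a dimension and an entry function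
(indices are 0-based; entries with an index `≥ d` are irrelevant/zero). -/
structure FMat where
  d : ℕ
  entry : ℕ → ℕ → ℕ

/-- 0-based index of the first row whose rightmost entry is nonzero. -/
noncomputable def mindex (M : FMat) : ℕ :=
  sInf {i | M.entry i (M.d - 1) ≠ 0}

/-- One step of the recursive bijection from ascent sequences to Fishburn matrices,
with cases AM1, AM2, AM3 (0-based indices). -/
noncomputable def fStep (M : FMat) (a : ℕ) : FMat :=
  if a ≤ mindex M then
    -- AM1: increase entry (a, d-1)
    ⟨M.d, fun i j => M.entry i j + if i = a ∧ j = M.d - 1 then 1 else 0⟩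
  else if a = M.d then
    -- AM2: append a new row and column, with 1 in the new diagonal entry
    ⟨M.d + 1, fun i j =>
      if i = M.d ∨ j = M.d then (if i = M.d ∧ j = M.d then 1 else 0)
      else M.entry i j⟩
  else
    -- AM3: insert a new row and column at index a
    ⟨M.d + 1, fun i j =>
      if i = a then (if j = M.d then 1 else 0)
      else if j = a then (if i < a then M.entry i (M.d - 1) else 0)
      else if j = M.d ∧ i < a then 0
      else M.entry (if i < a then i else i - 1) (if j < a then j else j - 1)⟩

/-- The map from ascent sequences to Fishburn matrices. -/
noncomputable def fAM (l : List ℕ) : FMat :=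
  l.tail.foldl fStep ⟨1, fun i j => if i = 0 ∧ j = 0 then 1 else 0⟩

/-- Fishburn matrix: upper triangular (and supported on `[0,d) × [0,d)`),
with no zero row and no zero column. -/
def IsFishburn (M : FMat) : Prop :=
  (∀ i j, (M.d ≤ i ∨ M.d ≤ j ∨ j < i) → M.entry i j = 0) ∧
  (∀ i, i < M.d → ∃ j, j < M.d ∧ M.entry i j ≠ 0) ∧
  (∀ j, j < M.d → ∃ i, i < M.d ∧ M.entry i j ≠ 0)

def entrySum (M : FMat) : ℕ :=
  ∑ i ∈ Finset.range M.d, ∑ j ∈ Finset.range M.d, M.entry i j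

/-- Reflection of a matrix through its antidiagonal. -/
def reflect (M : FMat) : FMat :=
  ⟨M.d, fun i j => if i < M.d ∧ j < M.d then M.entry (M.d - 1 - j) (M.d - 1 - i) else 0⟩

/-- The canonical sequence `(0^{m₀₀}, 1^{m₁₁}, 0^{m₀₁}, 2^{m₂₂}, 1^{m₁₂}, 0^{m₀₂}, …)`
(0-based indices) associated to a matrix; this is `f_MA(M)` for `M ∈ RMatrices`. -/
def canonSeq (M : FMat) : List ℕ :=
  (List.range M.d).flatMap (fun j =>
    (List.range (j + 1)).reverse.flatMap (fun i => List.replicate (M.entry i j) i))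

/-- The dual canonical sequence
`(0^{m_{d-1,d-1}}, 1^{m_{d-2,d-2}}, 0^{m_{d-2,d-1}}, …, (d-1)^{m_{0,0}}, …, 0^{m_{0,d-1}})`,
i.e. `f_MA` applied to the antidiagonal reflection of `M`. -/
def dualCanonSeq (M : FMat) : List ℕ :=
  (List.range M.d).flatMap (fun j =>
    (List.range (j + 1)).reverse.flatMap (fun i =>
      List.replicate (M.entry (M.d - 1 - j) (M.d - 1 - i)) i))

/-- A matrix is SE-free if it has no pair of nonzero entries `m i j`, `m i' j'`
with `i < i'`, `j < j'` and `i' ≤ j`. -/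
def SEFree (M : FMat) : Prop :=
  ¬ ∃ i j i' j', i < i' ∧ j < j' ∧ i' ≤ j ∧ j' < M.d ∧
    M.entry i j ≠ 0 ∧ M.entry i' j' ≠ 0

/-- Generalized ballot sequence (Yamanouchi word): in every prefix, each value `j+1`
occurs at most as often as `j`. -/
def IsBallot (l : List ℕ) : Prop :=
  ∀ k j, (l.take k).count (j + 1) ≤ (l.take k).count j


/-!
The 101-avoiding ascent sequences are exactly the canonical sequences `canonSeq M` of the
SE-free Fishburn matrices `M`, and `fAM` inverts `canonSeq` on them. Let `l = canonSeq M` avoid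
101 and let `x ≤ M.d` (the ascent bound). Since `canonSeq M` lists the nonzero cells column by
column, each column bottom-up, the pair `x … w` with `w < x` occurs in `l` exactly when there are
nonzero cells `(x, c)` and `(w, c')` with `x ≤ c ≤ c'`. Hence `l ++ [x]` avoids 101 iff either
`x = M.d`, where `fStep` adds the new diagonal cell (AM2), or `x ≤ mindex M` and raising the
cell `(x, M.d - 1)` (AM1) keeps `M` SE-free; when `mindex M < x < M.d` the diagonal cell `(x, x)`
and the cell `(mindex M, M.d - 1)` give a 101, so AM3 never occurs. In both remaining cases the
canonical sequence of the new matrix is `l ++ [x]`. Induction along `l` gives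
`canonSeq (fAM l) = l`, hence injectivity, and removing the last cell of an SE-free Fishburn
matrix gives surjectivity.
-/

section

open List

lemma pair_sublist_iff_getD {α : Type*} {l : List α} {a b x : α} :
    [a, b] <+ l ↔ ∃ p q, p < q ∧ q < l.length ∧ l.getD p x = a ∧ l.getD q x = b := by
  constructor
  · rw [cons_sublist_iff]
    rintro ⟨r₁, r₂, rfl, ha, hb⟩
    obtain ⟨p, hp, rfl⟩ := getElem_of_mem ha
    obtain ⟨q, hq, rfl⟩ := getElem_of_mem (singleton_sublist.mp hb)
    refine ⟨p, r₁.length + q, by omega, by simp; omega, ?_, ?_⟩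
    · simp [getD_eq_getElem?_getD, getElem?_append_left hp, getElem?_eq_getElem hp]
    · simp [getD_eq_getElem?_getD, getElem?_append_right, getElem?_eq_getElem hq]
  · rintro ⟨p, q, hpq, hq, rfl, rfl⟩
    rw [getD_eq_getElem _ _ (hpq.trans hq), getD_eq_getElem _ _ hq]
    have hp : l[p] ∈ l.take q := mem_iff_getElem.mpr ⟨p, by simp; omega, by simp⟩
    have hq : l[q] ∈ l.drop q := mem_iff_getElem.mpr ⟨0, by simp; omega, by simp⟩
    simpa using (singleton_sublist.mpr hp).append (singleton_sublist.mpr hq)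

lemma pair_sublist_append_iff {α : Type*} {s t : List α} {a b : α} :
    [a, b] <+ s ++ t ↔ [a, b] <+ s ∨ (a ∈ s ∧ b ∈ t) ∨ [a, b] <+ t := by
  constructor
  · rw [sublist_append_iff]
    rintro ⟨l₁, l₂, h, h₁, h₂⟩
    rcases l₁ with _ | ⟨x, _ | ⟨y, _ | ⟨z, l₁⟩⟩⟩ <;> simp only [nil_append, cons_append,
      cons.injEq, reduceCtorEq, and_false] at h
    · exact .inr (.inr (h ▸ h₂))
    · obtain ⟨rfl, rfl⟩ := h
      exact .inr (.inl ⟨singleton_sublist.mp h₁, singleton_sublist.mp h₂⟩)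
    · obtain ⟨rfl, rfl, rfl⟩ := h
      exact .inl h₁
  · rintro (h | ⟨ha, hb⟩ | h)
    · exact h.trans (sublist_append_left s t)
    · exact (singleton_sublist.mpr ha).append (singleton_sublist.mpr hb)
    · exact h.trans (sublist_append_right s t)

lemma contains101_append_singleton {s : List ℕ} {x : ℕ} :
    Contains101 (s ++ [x]) ↔ Contains101 s ∨ ∃ w < x, [x, w] <+ s := by
  simp only [pair_sublist_iff_getD (x := 0)]
  constructor
  · rintro ⟨i, j, k, hij, hjk, hk, he, hl⟩
    rw [length_append, length_singleton] at hk
    rw [getD_append _ _ _ _ (by omega)] at he hl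
    rcases Nat.lt_or_ge k s.length with hks | hks
    · rw [getD_append _ _ _ _ hks] at he hl
      exact .inl ⟨i, j, k, hij, hjk, hks, he, hl⟩
    · obtain rfl : k = s.length := by omega
      rw [getD_append_right _ _ _ _ le_rfl, Nat.sub_self, getD_cons_zero] at he hl
      exact .inr ⟨_, hl, i, j, hij, hjk, he, rfl⟩
  · rintro (⟨i, j, k, hij, hjk, hk, he, hl⟩ | ⟨w, hw, p, q, hpq, hq, hp, rfl⟩)
    · refine ⟨i, j, k, hij, hjk, by simp; omega, ?_⟩
      simp only [getD_append _ _ _ _ hk, getD_append _ _ _ _ (hjk.trans hk),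
        getD_append _ _ _ _ (hij.trans (hjk.trans hk))]
      exact ⟨he, hl⟩
    · refine ⟨p, q, s.length, hpq, hq, by simp, ?_⟩
      simp only [getD_append _ _ _ _ hq, getD_append _ _ _ _ (hpq.trans hq),
        getD_append_right _ _ _ _ le_rfl, Nat.sub_self, getD_cons_zero]
      exact ⟨hp, hp ▸ hw⟩

lemma isAscSeq_append_singleton {s : List ℕ} {x : ℕ} (hs : s ≠ []) :
    IsAscSeq (s ++ [x]) ↔ IsAscSeq s ∧ x ≤ ascents s + 1 := by
  have hlen : 0 < s.length := length_pos_iff.mpr hs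
  have hget : ∀ k < s.length, (s ++ [x]).getD k 0 = s.getD k 0 := fun k hk =>
    getD_append _ _ _ _ hk
  have htake : ∀ k ≤ s.length, (s ++ [x]).take k = s.take k := fun k hk =>
    take_append_of_le_length hk
  have hlast : (s ++ [x]).getD s.length 0 = x := by
    rw [getD_append_right _ _ _ _ le_rfl, Nat.sub_self, getD_cons_zero]
  simp only [IsAscSeq, length_append, length_singleton, hget 0 hlen]
  constructor
  · rintro ⟨h0, h⟩
    refine ⟨⟨h0, fun k hk hk0 => ?_⟩, ?_⟩
    · simpa only [hget k hk, htake k hk.le] using h k (by omega) hk0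
    · simpa only [hlast, htake _ le_rfl, take_length] using h s.length (by omega) hlen
  · rintro ⟨⟨h0, h⟩, hx⟩
    refine ⟨h0, fun k hk hk0 => ?_⟩
    rcases Nat.lt_or_ge k s.length with hks | hks
    · simpa only [hget k hks, htake k hks.le] using h k hks hk0
    · obtain rfl : k = s.length := by omega
      simpa only [hlast, htake _ le_rfl, take_length] using hx

lemma zip_tail_append_pair {α : Type*} (t : List α) (y x : α) :
    (t ++ [y, x]).zip (t ++ [y, x]).tail = (t ++ [y]).zip (t ++ [y]).tail ++ [(y, x)] := by
  induction t with
  | nil => rfl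
  | cons z t ih => cases t <;> simp_all

lemma ascents_append_pair (t : List ℕ) (y x : ℕ) :
    ascents (t ++ [y, x]) = ascents (t ++ [y]) + if y < x then 1 else 0 := by
  simp only [ascents, zip_tail_append_pair, filter_append, length_append]
  split_ifs <;> simp [*]

lemma ascents_append_singleton {s : List ℕ} {x y : ℕ} (h : s.getLast? = some y) :
    ascents (s ++ [x]) = ascents s + if y < x then 1 else 0 := by
  obtain ⟨t, rfl⟩ := getLast?_eq_some_iff.mp h
  simpa using ascents_append_pair t y x

def canonBlock (e : ℕ → ℕ → ℕ) (j : ℕ) : List ℕ :=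
  (range (j + 1)).reverse.flatMap fun i => replicate (e i j) i

def canonList (e : ℕ → ℕ → ℕ) (d : ℕ) : List ℕ :=
  (range d).flatMap (canonBlock e)

lemma canonSeq_eq_canonList (M : FMat) : canonSeq M = canonList M.entry M.d := rfl

lemma canonList_succ (e : ℕ → ℕ → ℕ) (d : ℕ) :
    canonList e (d + 1) = canonList e d ++ canonBlock e d := by
  simp [canonList, range_succ]

lemma mem_canonBlock {e : ℕ → ℕ → ℕ} {j w : ℕ} :
    w ∈ canonBlock e j ↔ w ≤ j ∧ e w j ≠ 0 := by
  simp only [canonBlock, mem_flatMap, mem_reverse, mem_range, mem_replicate]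
  constructor
  · rintro ⟨i, hi, hne, rfl⟩
    exact ⟨by omega, hne⟩
  · rintro ⟨hw, hne⟩
    exact ⟨w, by omega, hne, rfl⟩

lemma mem_canonList {e : ℕ → ℕ → ℕ} {d w : ℕ} :
    w ∈ canonList e d ↔ ∃ c < d, w ≤ c ∧ e w c ≠ 0 := by
  simp [canonList, mem_canonBlock]

lemma pairwise_ge_canonBlock (e : ℕ → ℕ → ℕ) (j : ℕ) :
    (canonBlock e j).Pairwise (· ≥ ·) := by
  refine pairwise_flatMap.mpr ⟨fun i _ => pairwise_replicate.mpr (.inr le_rfl), ?_⟩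
  refine (pairwise_reverse.mpr pairwise_lt_range).imp fun {i i'} hii' x hx y hy => ?_
  rw [mem_replicate] at hx hy
  omega

lemma pair_sublist_canonBlock_iff {e : ℕ → ℕ → ℕ} {j v w : ℕ} (hwv : w < v) :
    [v, w] <+ canonBlock e j ↔ v ∈ canonBlock e j ∧ w ∈ canonBlock e j := by
  refine ⟨fun h => ⟨h.subset (by simp), h.subset (by simp)⟩, fun ⟨hv, hw⟩ => ?_⟩
  refine sublist_of_subperm_of_pairwise ?_ (by simpa using hwv.le) (pairwise_ge_canonBlock e j)
  exact Nodup.subperm (by simpa using hwv.ne') (by simp [hv, hw])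

lemma pair_sublist_canonList_iff {e : ℕ → ℕ → ℕ} {d v w : ℕ} (hwv : w < v) :
    [v, w] <+ canonList e d ↔
      ∃ c c', v ≤ c ∧ c ≤ c' ∧ c' < d ∧ w ≤ c' ∧ e v c ≠ 0 ∧ e w c' ≠ 0 := by
  induction d with
  | zero => simp [canonList]
  | succ d ih =>
    rw [canonList_succ, pair_sublist_append_iff, ih, pair_sublist_canonBlock_iff hwv,
      mem_canonList, mem_canonBlock, mem_canonBlock]
    constructor
    · rintro (⟨c, c', hvc, hcc', hc'd, hwc', hv, hw⟩ | ⟨⟨c, hcd, hvc, hv⟩, hwd, hw⟩ |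
        ⟨⟨hvd, hv⟩, hwd, hw⟩)
      · exact ⟨c, c', hvc, hcc', by omega, hwc', hv, hw⟩
      · exact ⟨c, d, hvc, hcd.le, by omega, hwd, hv, hw⟩
      · exact ⟨d, d, hvd, le_rfl, by omega, hwd, hv, hw⟩
    · rintro ⟨c, c', hvc, hcc', hc'd, hwc', hv, hw⟩
      rcases Nat.lt_or_ge c' d with hc' | hc'
      · exact .inl ⟨c, c', hvc, hcc', hc', hwc', hv, hw⟩
      obtain rfl : c' = d := by omega
      rcases Nat.lt_or_ge c c' with hc | hc
      · exact .inr (.inl ⟨⟨c, hc, hvc, hv⟩, hwc', hw⟩)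
      · obtain rfl : c = c' := by omega
        exact .inr (.inr ⟨⟨hvc, hv⟩, hwc', hw⟩)

lemma canonList_congr {e e' : ℕ → ℕ → ℕ} {d : ℕ}
    (h : ∀ i j, i ≤ j → j < d → e i j = e' i j) : canonList e d = canonList e' d := by
  refine flatMap_congr fun j hj => flatMap_congr fun i hi => ?_
  simp only [mem_range, mem_reverse] at hi hj
  rw [h i j (by omega) hj]

lemma canonBlock_eq_singleton {e : ℕ → ℕ → ℕ} {j : ℕ} (hjj : e j j = 1)
    (hlow : ∀ i < j, e i j = 0) : canonBlock e j = [j] := by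
  simpa [canonBlock, range_succ, hjj, flatMap_eq_nil_iff] using hlow

lemma canonBlock_eq_append_singleton {e e' : ℕ → ℕ → ℕ} {j a : ℕ} (ha : a ≤ j)
    (hlow : ∀ i < a, e i j = 0) (he' : ∀ i, e' i j = e i j + if i = a then 1 else 0) :
    canonBlock e' j = canonBlock e j ++ [a] := by
  suffices ∀ k, a < k → (range k).reverse.flatMap (fun i => replicate (e' i j) i) =
      (range k).reverse.flatMap (fun i => replicate (e i j) i) ++ [a] from this _ (by omega)
  intro k hk
  induction k with
  | zero => omega
  | succ k ih =>
    simp only [range_succ, reverse_append, reverse_singleton, singleton_append, flatMap_cons,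
      he' k]
    rcases Nat.lt_or_ge a k with hak | hak
    · rw [if_neg hak.ne', Nat.add_zero, ih hak, append_assoc]
    · obtain rfl : k = a := by omega
      have hnil : ∀ f : ℕ → ℕ, (∀ i < k, f i = 0) →
          (range k).reverse.flatMap (fun i => replicate (f i) i) = [] := fun f hf => by
        simpa [flatMap_eq_nil_iff] using hf
      rw [if_pos rfl, hnil _ hlow, hnil _ fun i hi => by simp [he', hlow i hi, hi.ne],
        replicate_succ', append_nil, append_nil]

lemma sum_map_range {β : Type*} [AddCommMonoid β] (f : ℕ → β) (n : ℕ) :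
    ((range n).map f).sum = ∑ i ∈ Finset.range n, f i := by
  rw [Finset.sum_eq_multiset_sum, Finset.range_val, Multiset.range]
  simp

lemma length_canonList (e : ℕ → ℕ → ℕ) (d : ℕ) :
    (canonList e d).length = ∑ j ∈ Finset.range d, ∑ i ∈ Finset.range (j + 1), e i j := by
  simp [canonList, canonBlock, length_flatMap, map_reverse, sum_reverse, sum_map_range]

lemma length_canonSeq {M : FMat} (hM : IsFishburn M) : (canonSeq M).length = entrySum M := by
  rw [canonSeq_eq_canonList, length_canonList, entrySum, Finset.sum_comm]
  refine Finset.sum_congr rfl fun j hj => Finset.sum_subset ?_ fun i _ hi => ?_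
  · simpa using Finset.mem_range.mp hj
  · exact hM.1 i j (.inr (.inr (by simpa using hi)))

lemma FMat.ext {M N : FMat} (hd : M.d = N.d) (he : ∀ i j, M.entry i j = N.entry i j) :
    M = N := by
  cases M; cases N; cases hd; congr; funext i j; exact he i j

namespace FMat

@[simps]
def empty : FMat := ⟨0, fun _ _ => 0⟩

-- `incLast` and `extend` are the cases AM1 and AM2 of `fStep`; `decLast` and `dropLast`
-- undo them.
@[simps]
def incLast (M : FMat) (a : ℕ) : FMat :=
  ⟨M.d, fun i j => M.entry i j + if i = a ∧ j = M.d - 1 then 1 else 0⟩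

@[simps]
def extend (M : FMat) : FMat :=
  ⟨M.d + 1, fun i j =>
    if i = M.d ∨ j = M.d then (if i = M.d ∧ j = M.d then 1 else 0) else M.entry i j⟩

@[simps]
def decLast (M : FMat) (a : ℕ) : FMat :=
  ⟨M.d, fun i j => M.entry i j - if i = a ∧ j = M.d - 1 then 1 else 0⟩

@[simps]
def dropLast (M : FMat) : FMat :=
  ⟨M.d - 1, fun i j => if j < M.d - 1 then M.entry i j else 0⟩

end FMat

lemma fStep_of_le_mindex {M : FMat} {a : ℕ} (ha : a ≤ mindex M) : fStep M a = M.incLast a :=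
  if_pos ha

lemma fStep_d {M : FMat} (h : mindex M < M.d) : fStep M M.d = M.extend := by
  rw [fStep, if_neg (by omega), if_pos rfl]
  rfl

lemma fAM_append_singleton {s : List ℕ} (hs : s ≠ []) (x : ℕ) :
    fAM (s ++ [x]) = fStep (fAM s) x := by
  rw [fAM, fAM, tail_append_of_ne_nil hs, foldl_append]
  rfl

lemma fAM_singleton_zero : fAM [0] = FMat.empty.extend :=
  FMat.ext rfl fun i j => by
    simp only [fAM, tail_cons, foldl_nil, FMat.extend_entry, FMat.empty_d, FMat.empty_entry]
    split_ifs <;> omega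

lemma IsFishburn.le_of_entry_ne_zero {M : FMat} (hM : IsFishburn M) {i j : ℕ}
    (h : M.entry i j ≠ 0) : i ≤ j ∧ j < M.d := by
  by_contra hc
  exact h (hM.1 i j (by omega))

lemma IsFishburn.entry_self_ne_zero {M : FMat} (hM : IsFishburn M) (hS : SEFree M) {i : ℕ}
    (hi : i < M.d) : M.entry i i ≠ 0 := by
  obtain ⟨k, -, hk⟩ := hM.2.2 i hi
  obtain ⟨c, hc, hc'⟩ := hM.2.1 i hi
  have hki := (hM.le_of_entry_ne_zero hk).1
  have hic := (hM.le_of_entry_ne_zero hc').1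
  rcases hki.eq_or_lt with rfl | hki
  · exact hk
  rcases hic.eq_or_lt with rfl | hic
  · exact hc'
  exact absurd ⟨k, i, i, c, hki, hic, le_rfl, hc, hk, hc'⟩ hS

lemma SEFree.mono {M N : FMat} (hS : SEFree M) (hd : N.d ≤ M.d)
    (h : ∀ i j, N.entry i j ≠ 0 → M.entry i j ≠ 0) : SEFree N :=
  fun ⟨i, j, i', j', hi, hj, hij, hj', he, he'⟩ =>
    hS ⟨i, j, i', j', hi, hj, hij, by omega, h i j he, h i' j' he'⟩

lemma entry_eq_zero_of_lt_mindex {M : FMat} {i : ℕ} (hi : i < mindex M) :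
    M.entry i (M.d - 1) = 0 :=
  not_not.mp (Nat.notMem_of_lt_sInf hi)

lemma IsFishburn.entry_mindex_ne_zero {M : FMat} (hM : IsFishburn M) (hd : 0 < M.d) :
    M.entry (mindex M) (M.d - 1) ≠ 0 :=
  have ⟨i, _, hi⟩ := hM.2.2 (M.d - 1) (by omega)
  Nat.sInf_mem (s := {i | M.entry i (M.d - 1) ≠ 0}) ⟨i, hi⟩

lemma IsFishburn.mindex_lt {M : FMat} (hM : IsFishburn M) (hd : 0 < M.d) : mindex M < M.d := by
  have := (hM.le_of_entry_ne_zero (hM.entry_mindex_ne_zero hd)).1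
  omega

lemma mindex_eq {M : FMat} {a : ℕ} (ha : M.entry a (M.d - 1) ≠ 0)
    (hlow : ∀ i < a, M.entry i (M.d - 1) = 0) : mindex M = a :=
  le_antisymm (Nat.sInf_le ha) (le_csInf ⟨a, ha⟩ fun i hi => not_lt.mp fun h => hi (hlow i h))

lemma le_mindex {M : FMat} (hM : IsFishburn M) (hd : 0 < M.d) {a : ℕ}
    (hlow : ∀ i < a, M.entry i (M.d - 1) = 0) : a ≤ mindex M :=
  not_lt.mp fun h => hM.entry_mindex_ne_zero hd (hlow _ h)

lemma IsFishburn.eq_empty {M : FMat} (hM : IsFishburn M) (hd : M.d = 0) : M = FMat.empty :=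
  FMat.ext hd fun i j => hM.1 i j (.inl (by omega))

lemma isFishburn_empty : IsFishburn FMat.empty :=
  ⟨fun _ _ _ => rfl, fun _ h => absurd h (Nat.not_lt_zero _),
    fun _ h => absurd h (Nat.not_lt_zero _)⟩

section incLast

variable {M : FMat} {a : ℕ}

lemma IsFishburn.incLast (hM : IsFishburn M) (ha : a < M.d) : IsFishburn (M.incLast a) := by
  refine ⟨fun i j h => ?_, fun i hi => ?_, fun j hj => ?_⟩
  · simp only [FMat.incLast_d, FMat.incLast_entry] at h ⊢
    rw [hM.1 i j h, if_neg (by omega)]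
  · obtain ⟨j, hj, hne⟩ := hM.2.1 i hi
    exact ⟨j, hj, by simp only [FMat.incLast_entry]; omega⟩
  · obtain ⟨i, hi, hne⟩ := hM.2.2 j hj
    exact ⟨i, hi, by simp only [FMat.incLast_entry]; omega⟩

lemma mindex_incLast (ha : a ≤ mindex M) : mindex (M.incLast a) = a :=
  mindex_eq (by simp) fun i hi => by
    simp [entry_eq_zero_of_lt_mindex (hi.trans_le ha), hi.ne]

lemma canonSeq_incLast (ha : a ≤ mindex M) (haM : a < M.d) :
    canonSeq (M.incLast a) = canonSeq M ++ [a] := by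
  obtain ⟨d, hd⟩ : ∃ d, M.d = d + 1 := ⟨M.d - 1, by omega⟩
  simp only [canonSeq_eq_canonList, FMat.incLast_d, hd, canonList_succ, append_assoc]
  congr 1
  · exact canonList_congr fun i j _ hj => by simp [hd]; omega
  · refine canonBlock_eq_append_singleton (by omega) (fun i hi => ?_) fun i => ?_
    · simpa [hd] using entry_eq_zero_of_lt_mindex (hi.trans_le ha)
    · simp [hd]

lemma seFree_incLast_iff (hM : IsFishburn M) (hS : SEFree M) (hd : 0 < M.d)
    (ha : a ≤ mindex M) : SEFree (M.incLast a) ↔ ∀ w < a, ¬ [a, w] <+ canonSeq M := by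
  have haM := (hM.mindex_lt hd).trans_le' ha
  rw [canonSeq_eq_canonList]
  constructor
  · intro hS' w hw hsub
    obtain ⟨c, c', hac, hcc', hc'd, -, -, hwc'⟩ := (pair_sublist_canonList_iff hw).mp hsub
    have hc' : c' ≠ M.d - 1 := fun h =>
      hwc' (h ▸ entry_eq_zero_of_lt_mindex (hw.trans_le ha))
    refine hS' ⟨w, c', a, M.d - 1, hw, by omega, by omega, by simp; omega, ?_, by simp⟩
    simpa [hc'] using hwc'
  · rintro h ⟨i, j, i', j', hi, hj, hij, hj', he, he'⟩
    simp only [FMat.incLast_d] at hj'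
    have hold : M.entry i j ≠ 0 := by simpa [show j ≠ M.d - 1 by omega] using he
    by_cases hnew : i' = a ∧ j' = M.d - 1
    · obtain ⟨rfl, rfl⟩ := hnew
      refine h i hi ((pair_sublist_canonList_iff hi).mpr ⟨i', j, le_rfl, hij, by omega,
        (hM.le_of_entry_ne_zero hold).1, hM.entry_self_ne_zero hS haM, hold⟩)
    · exact hS ⟨i, j, i', j', hi, hj, hij, hj', hold, by simpa [hnew] using he'⟩

end incLast

section extend

variable {M : FMat}

lemma IsFishburn.extend (hM : IsFishburn M) : IsFishburn M.extend := by
  refine ⟨fun i j h => ?_, fun i hi => ?_, fun j hj => ?_⟩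
  · simp only [FMat.extend_d, FMat.extend_entry] at h ⊢
    split_ifs <;> first | omega | exact hM.1 i j (by omega)
  · rcases (Nat.lt_succ_iff.mp hi).lt_or_eq with hi | rfl
    · obtain ⟨j, hj, hne⟩ := hM.2.1 i hi
      exact ⟨j, by simp; omega, by simpa [hi.ne, hj.ne] using hne⟩
    · exact ⟨M.d, by simp, by simp⟩
  · rcases (Nat.lt_succ_iff.mp hj).lt_or_eq with hj | rfl
    · obtain ⟨i, hi, hne⟩ := hM.2.2 j hj
      exact ⟨i, by simp; omega, by simpa [hi.ne, hj.ne] using hne⟩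
    · exact ⟨M.d, by simp, by simp⟩

lemma SEFree.extend (hM : IsFishburn M) (hS : SEFree M) : SEFree M.extend := by
  rintro ⟨i, j, i', j', hi, hj, hij, hj', he, he'⟩
  simp only [FMat.extend_d, FMat.extend_entry] at hj' he he'
  split_ifs at he he' <;> try omega
  exact hS ⟨i, j, i', j', hi, hj, hij, (hM.le_of_entry_ne_zero he').2, he, he'⟩

lemma mindex_extend : mindex M.extend = M.d :=
  mindex_eq (by simp) fun i hi => by simp [hi.ne]

lemma canonSeq_extend : canonSeq M.extend = canonSeq M ++ [M.d] := by
  simp only [canonSeq_eq_canonList, FMat.extend_d, canonList_succ]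
  congr 1
  · exact canonList_congr fun i j _ hj => by simp [hj.ne]; omega
  · exact canonBlock_eq_singleton (by simp) fun i hi => by simp [hi.ne]

end extend

section decompose

variable {M : FMat}

lemma incLast_decLast {a : ℕ} (ha : M.entry a (M.d - 1) ≠ 0) : (M.decLast a).incLast a = M :=
  FMat.ext rfl fun i j => by
    simp only [FMat.incLast_entry, FMat.decLast_entry, FMat.decLast_d]
    split_ifs with h
    · obtain ⟨rfl, rfl⟩ := h
      omega
    · rfl

lemma IsFishburn.decLast (hM : IsFishburn M) (hS : SEFree M) {a : ℕ}
    (hkeep : a < M.d - 1 ∨ 2 ≤ M.entry a (M.d - 1)) : IsFishburn (M.decLast a) := by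
  have hentry : ∀ i j, ¬(i = a ∧ j = M.d - 1) → (M.decLast a).entry i j = M.entry i j :=
    fun i j h => by simp [h]
  refine ⟨fun i j h => ?_, fun i hi => ?_, fun j hj => ?_⟩
  · simp only [FMat.decLast_entry, FMat.decLast_d] at h ⊢
    rw [hM.1 i j h, Nat.zero_sub]
  · obtain ⟨j, hj, hne⟩ := hM.2.1 i hi
    by_cases hij : i = a ∧ j = M.d - 1
    · obtain ⟨rfl, rfl⟩ := hij
      rcases hkeep with hlt | h2
      · exact ⟨i, hi, by rw [hentry i i (by omega)]; exact hM.entry_self_ne_zero hS hi⟩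
      · exact ⟨M.d - 1, hj, by simp; omega⟩
    · exact ⟨j, hj, by rwa [hentry i j hij]⟩
  · obtain ⟨i, hi, hne⟩ := hM.2.2 j hj
    by_cases hij : i = a ∧ j = M.d - 1
    · obtain ⟨rfl, rfl⟩ := hij
      rcases hkeep with hlt | h2
      · exact ⟨M.d - 1, hj, by
          rw [hentry _ _ (by omega)]; exact hM.entry_self_ne_zero hS hj⟩
      · exact ⟨i, hi, by simp; omega⟩
    · exact ⟨i, hi, by rwa [hentry i j hij]⟩

lemma extend_dropLast (hM : IsFishburn M) (hd : 0 < M.d)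
    (hcol : ∀ i < M.d - 1, M.entry i (M.d - 1) = 0) (hone : M.entry (M.d - 1) (M.d - 1) = 1) :
    M.dropLast.extend = M := by
  refine FMat.ext (by simp; omega) fun i j => ?_
  simp only [FMat.extend_entry, FMat.dropLast_d, FMat.dropLast_entry]
  split_ifs with h1 h2 h3
  · obtain ⟨rfl, rfl⟩ := h2
    exact hone.symm
  · rcases Nat.lt_or_ge i (M.d - 1) with hi | hi
    · obtain rfl : j = M.d - 1 := by omega
      exact (hcol i hi).symm
    · exact (hM.1 i j (by omega)).symm
  · rfl
  · exact (hM.1 i j (by omega)).symm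

lemma IsFishburn.dropLast (hM : IsFishburn M) (hcol : ∀ i < M.d - 1, M.entry i (M.d - 1) = 0) :
    IsFishburn M.dropLast := by
  refine ⟨fun i j h => ?_, fun i hi => ?_, fun j hj => ?_⟩
  · simp only [FMat.dropLast_entry, FMat.dropLast_d] at h ⊢
    split_ifs
    · exact hM.1 i j (by omega)
    · rfl
  · simp only [FMat.dropLast_d] at hi
    obtain ⟨j, hj, hne⟩ := hM.2.1 i (by omega)
    have hj' : j ≠ M.d - 1 := fun h => hne (h ▸ hcol i hi)
    refine ⟨j, by simp only [FMat.dropLast_d]; omega, ?_⟩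
    simpa [show j < M.d - 1 by omega] using hne
  · simp only [FMat.dropLast_d] at hj
    obtain ⟨i, -, hne⟩ := hM.2.2 j (by omega)
    exact ⟨i, (hM.le_of_entry_ne_zero hne).1.trans_lt hj, by simpa [hj] using hne⟩

lemma IsFishburn.exists_eq_extend_or_eq_incLast (hM : IsFishburn M) (hS : SEFree M)
    (hd : 0 < M.d) : ∃ M', IsFishburn M' ∧ SEFree M' ∧
      (M = M'.extend ∨ 0 < M'.d ∧ ∃ a ≤ mindex M', M = M'.incLast a) := by
  have ha := hM.entry_mindex_ne_zero hd
  have ha' := (hM.le_of_entry_ne_zero ha).1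
  by_cases hlast : mindex M = M.d - 1 ∧ M.entry (mindex M) (M.d - 1) = 1
  · obtain ⟨hlast, hone⟩ := hlast
    have hcol : ∀ i < M.d - 1, M.entry i (M.d - 1) = 0 := fun i hi =>
      entry_eq_zero_of_lt_mindex (by omega)
    refine ⟨M.dropLast, hM.dropLast hcol, hS.mono (by simp) fun i j h => ?_,
      .inl (extend_dropLast hM hd hcol (hlast ▸ hone)).symm⟩
    simp only [FMat.dropLast_entry] at h
    split_ifs at h
    · exact h
    · exact absurd rfl h
  · have hM' := hM.decLast hS (a := mindex M) (by omega)
    refine ⟨M.decLast (mindex M), hM', hS.mono le_rfl fun i j h => ?_,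
      .inr ⟨hd, mindex M, le_mindex hM' hd fun i hi => ?_, (incLast_decLast ha).symm⟩⟩
    · simp only [FMat.decLast_entry] at h
      omega
    · simp [entry_eq_zero_of_lt_mindex hi]

end decompose

/-- The invariant carried along a 101-avoiding ascent sequence `l` and `M = fAM l`: its last
two fields decide which case of `fStep` the next entry of `l` selects. -/
structure Represents (M : FMat) (l : List ℕ) : Prop where
  isFishburn : IsFishburn M
  seFree : SEFree M
  canonSeq_eq : canonSeq M = l
  ascents_add_one : ascents l + 1 = M.d
  getLast?_eq : l.getLast? = some (mindex M)

namespace Represents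

variable {M : FMat} {l : List ℕ}

lemma d_pos (h : Represents M l) : 0 < M.d := by
  have := h.ascents_add_one
  omega

lemma incLast (h : Represents M l) {x : ℕ} (hx : x ≤ mindex M) (hS : SEFree (M.incLast x)) :
    Represents (M.incLast x) (l ++ [x]) where
  isFishburn := h.isFishburn.incLast ((h.isFishburn.mindex_lt h.d_pos).trans_le' hx)
  seFree := hS
  canonSeq_eq := by
    rw [canonSeq_incLast hx ((h.isFishburn.mindex_lt h.d_pos).trans_le' hx),
      h.canonSeq_eq]
  ascents_add_one := by
    rw [ascents_append_singleton h.getLast?_eq, if_neg (not_lt.mpr hx), Nat.add_zero]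
    exact h.ascents_add_one
  getLast?_eq := by rw [getLast?_concat, mindex_incLast hx]

lemma extend (h : Represents M l) : Represents M.extend (l ++ [M.d]) where
  isFishburn := h.isFishburn.extend
  seFree := h.seFree.extend h.isFishburn
  canonSeq_eq := by rw [canonSeq_extend, h.canonSeq_eq]
  ascents_add_one := by
    rw [ascents_append_singleton h.getLast?_eq, if_pos (h.isFishburn.mindex_lt h.d_pos),
      FMat.extend_d, h.ascents_add_one]
  getLast?_eq := by rw [getLast?_concat, mindex_extend]

lemma not_contains101_append_iff (h : Represents M l) (hl : ¬Contains101 l) {x : ℕ}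
    (hx : x ≤ M.d) :
    ¬Contains101 (l ++ [x]) ↔ x = M.d ∨ x ≤ mindex M ∧ SEFree (M.incLast x) := by
  have hM := h.isFishburn
  rw [contains101_append_singleton, not_or, and_iff_right hl, ← h.canonSeq_eq]
  rcases hx.eq_or_lt with rfl | hx
  · refine iff_of_true (fun ⟨w, _, hsub⟩ => ?_) (.inl rfl)
    obtain ⟨c, hc, hdc, -⟩ := mem_canonList.mp (hsub.subset (mem_cons_self ..))
    omega
  rcases le_or_gt x (mindex M) with hxm | hxm
  · rw [seFree_incLast_iff hM h.seFree h.d_pos hxm]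
    simp [hx.ne, hxm]
  · refine iff_of_false (fun hw => hw ⟨_, hxm, ?_⟩) (by omega)
    rw [canonSeq_eq_canonList, pair_sublist_canonList_iff hxm]
    exact ⟨x, M.d - 1, le_rfl, by omega, by omega, by omega, hM.entry_self_ne_zero h.seFree hx,
      hM.entry_mindex_ne_zero h.d_pos⟩

end Represents

lemma represents_singleton_zero : Represents (fAM [0]) [0] := by
  rw [fAM_singleton_zero]
  refine ⟨isFishburn_empty.extend, SEFree.extend isFishburn_empty ?_, rfl, rfl, ?_⟩
  · rintro ⟨_, _, _, _, _, _, _, h, _⟩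
    exact Nat.not_lt_zero _ h
  · rw [mindex_extend]
    rfl

theorem represents_fAM {l : List ℕ} (hl : l ≠ []) (hasc : IsAscSeq l) (h101 : ¬Contains101 l) :
    Represents (fAM l) l := by
  induction l using List.reverseRecOn with
  | nil => exact absurd rfl hl
  | append_singleton s x ih =>
    rcases eq_or_ne s [] with rfl | hs
    · obtain rfl : x = 0 := hasc.1
      exact represents_singleton_zero
    obtain ⟨hasc', hx⟩ := (isAscSeq_append_singleton hs).mp hasc
    have h101' : ¬Contains101 s := fun h => h101 (contains101_append_singleton.mpr (.inl h))
    have hR := ih hs hasc' h101'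
    have hxd : x ≤ (fAM s).d := by have := hR.ascents_add_one; omega
    rw [fAM_append_singleton hs]
    rcases (hR.not_contains101_append_iff h101' hxd).mp h101 with rfl | ⟨hxm, hS⟩
    · rw [fStep_d (hR.isFishburn.mindex_lt hR.d_pos)]
      exact hR.extend
    · rw [fStep_of_le_mindex hxm]
      exact hR.incLast hxm hS

theorem exists_fAM_eq {M : FMat} (hM : IsFishburn M) (hS : SEFree M) (hd : 0 < M.d) :
    ∃ l, l ≠ [] ∧ IsAscSeq l ∧ ¬Contains101 l ∧ fAM l = M := by
  induction h : entrySum M using Nat.strong_induction_on generalizing M with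
  | _ n ih =>
    obtain ⟨M', hM', hS', rfl | ⟨hd', a, ha, rfl⟩⟩ := hM.exists_eq_extend_or_eq_incLast hS hd
    · rcases Nat.eq_zero_or_pos M'.d with hd0 | hd'
      · refine ⟨[0], by simp, ⟨rfl, by simp⟩, ?_, ?_⟩
        · rintro ⟨i, j, k, hij, hjk, hk, -⟩
          simp at hk
          omega
        · rw [fAM_singleton_zero, hM'.eq_empty hd0]
      have hlt : entrySum M' < n := by
        rw [← h, ← length_canonSeq hM, ← length_canonSeq hM', canonSeq_extend]
        simp
      obtain ⟨l, hl, hasc, h101, rfl⟩ := ih _ hlt hM' hS' hd' rfl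
      have hR := represents_fAM hl hasc h101
      refine ⟨l ++ [(fAM l).d], by simp, ?_, ?_, ?_⟩
      · exact (isAscSeq_append_singleton hl).mpr ⟨hasc, hR.ascents_add_one.ge⟩
      · exact (hR.not_contains101_append_iff h101 le_rfl).mpr (.inl rfl)
      · rw [fAM_append_singleton hl, fStep_d (hR.isFishburn.mindex_lt hd')]
    · have haM := (hM'.mindex_lt hd').trans_le' ha
      have hlt : entrySum M' < n := by
        rw [← h, ← length_canonSeq hM, ← length_canonSeq hM', canonSeq_incLast ha haM]
        simp
      obtain ⟨l, hl, hasc, h101, rfl⟩ := ih _ hlt hM' hS' hd' rfl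
      have hR := represents_fAM hl hasc h101
      refine ⟨l ++ [a], by simp, ?_, ?_, ?_⟩
      · exact (isAscSeq_append_singleton hl).mpr ⟨hasc, by have := hR.ascents_add_one; omega⟩
      · exact (hR.not_contains101_append_iff h101 haM.le).mpr (.inr ⟨ha, hS⟩)
      · rw [fAM_append_singleton hl, fStep_of_le_mindex ha]

end

theorem fAM_bijOn_avoid101 (n : ℕ) (hn : 0 < n) :
    Set.BijOn fAM {l : List ℕ | IsAscSeq l ∧ l.length = n ∧ ¬ Contains101 l}
      {M : FMat | IsFishburn M ∧ entrySum M = n ∧ SEFree M} := by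
  have represents : ∀ l ∈ {l : List ℕ | IsAscSeq l ∧ l.length = n ∧ ¬ Contains101 l},
      Represents (fAM l) l := fun l ⟨hasc, hlen, h101⟩ =>
    represents_fAM (List.ne_nil_of_length_pos (hlen ▸ hn)) hasc h101
  refine ⟨fun l hl => ?_, fun l₁ h₁ l₂ h₂ heq => ?_, fun M ⟨hM, hsum, hS⟩ => ?_⟩
  · have h := represents l hl
    refine ⟨h.isFishburn, ?_, h.seFree⟩
    rw [← length_canonSeq h.isFishburn, h.canonSeq_eq, hl.2.1]
  · rw [← (represents l₁ h₁).canonSeq_eq, heq, (represents l₂ h₂).canonSeq_eq]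
  · have hd : 0 < M.d := Nat.pos_of_ne_zero fun h0 => by
      simp [entrySum, h0] at hsum
      omega
    obtain ⟨l, hl, hasc, h101, rfl⟩ := exists_fAM_eq hM hS hd
    refine ⟨l, ⟨hasc, ?_, h101⟩, rfl⟩
    rw [← hsum, ← length_canonSeq hM, (represents_fAM hl hasc h101).canonSeq_eq]
end

section
/- If an SE-free Fishburn matrix has dimension k, then all of its diagonal entries are positive. Equivalently, if m_{ii} = 0 for some i, then the matrix contains an SE-pair (or has a zero row or column). -/
theorem seFree_diag_pos (M : FMat) (hF : IsFishburn M) (hSE : SEFree M) :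
    ∀ i, i < M.d → 0 < M.entry i i := by
  intro i hi
  by_contra h
  have hz : M.entry i i = 0 := Nat.eq_zero_of_not_pos h
  obtain ⟨hUT, hrow, hcol⟩ := hF
  obtain ⟨j', hj', hj'ne⟩ := hrow i hi
  obtain ⟨i', hi', hi'ne⟩ := hcol i hi
  -- upper triangular: i' ≤ i and i ≤ j'
  have hi'le : i' ≤ i := by
    by_contra hlt
    exact hi'ne (hUT i' i (Or.inr (Or.inr (Nat.lt_of_not_le hlt))))
  have hjle : i ≤ j' := by
    by_contra hlt
    exact hj'ne (hUT i j' (Or.inr (Or.inr (Nat.lt_of_not_le hlt))))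
  have hi'lt : i' < i := lt_of_le_of_ne hi'le (by rintro rfl; exact hi'ne hz)
  have hjlt : i < j' := lt_of_le_of_ne hjle (by rintro rfl; exact hj'ne hz)
  exact hSE ⟨i', i, i, j', hi'lt, hjlt, le_refl i, hj', hi'ne, hj'ne⟩
end
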